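/- arXiv:2502.04107 — 2 statements merged into one kernel-verified Lean document; each statement's English description precedes it below -/
import Mathlib

section
/- Let Ω ⊆ ℝⁿ be open, x ∈ Ω with r₀ := dist(x, Ωᶜ) > 0, and suppose there is a constant c₁ > 0 and R > 2r₀ such that |Ωᶜ ∩ B_ρ(x)| ≥ c₁ ρⁿ for all ρ ∈ (2r₀, R). Then for s ∈ (0,1), ∫_{Ωᶜ} |y − x|^{-(n+2s)} dy ≥ c₁ (2s)^{-1} ((2r₀)^{-2s} − R^{-2s}). -/
/-!
By the layer-cake formula, `∫_S |y - x|^(-a) dy = ∫_0^∞ |{y ∈ S : |y - x|^(-a) > t}| dt`.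
For `t ∈ (R^(-a), r^(-a))` and `x ∉ S`, the superlevel set contains `S ∩ B_ρ(x)` with
`ρ = t^(-1/a) ∈ (r, R)`, whose measure is at least `c ρ^d = c t^(-d/a)`. Integrating over `t`
gives `c a/(a - d) (r^(d-a) - R^(d-a))`; with `d = n`, `a = n + 2s`, `r = 2r₀` the factor
`(n + 2s)/(2s)` is at least `(2s)⁻¹`.
-/

open MeasureTheory Metric

theorem rpow_rpow_neg_inv {u a : ℝ} (hu : 0 ≤ u) (ha : a ≠ 0) : (u ^ (-a)) ^ (-a⁻¹) = u := by
  rw [← inv_neg, Real.rpow_rpow_inv hu (neg_ne_zero.2 ha)]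

theorem rpow_neg_inv_rpow_neg {u a : ℝ} (hu : 0 ≤ u) (ha : a ≠ 0) : (u ^ (-a⁻¹)) ^ (-a) = u := by
  rw [← inv_neg, Real.rpow_inv_rpow hu (neg_ne_zero.2 ha)]

theorem rpow_neg_inv_mem_Ioo {a r R t : ℝ} (ha : 0 < a) (hr : 0 < r) (hR : 0 < R)
    (ht : t ∈ Set.Ioo (R ^ (-a)) (r ^ (-a))) : t ^ (-a⁻¹) ∈ Set.Ioo r R := by
  have hanti : ∀ {u v : ℝ}, 0 < u → u < v → v ^ (-a⁻¹) < u ^ (-a⁻¹) := fun hu huv =>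
    Real.rpow_lt_rpow_of_neg hu huv (neg_lt_zero.2 (inv_pos.2 ha))
  have hR' : 0 < R ^ (-a) := Real.rpow_pos_of_pos hR _
  constructor
  · simpa only [rpow_rpow_neg_inv hr.le ha.ne'] using hanti (hR'.trans ht.1) ht.2
  · simpa only [rpow_rpow_neg_inv hR.le ha.ne'] using hanti hR' ht.1

theorem lt_rpow_neg_dist_of_mem_ball {X : Type*} [MetricSpace X] {a t : ℝ} (ha : 0 < a)
    (ht : 0 < t) {x y : X} (hyx : y ≠ x) (hy : y ∈ ball x (t ^ (-a⁻¹))) :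
    t < dist y x ^ (-a) := by
  calc t = (t ^ (-a⁻¹)) ^ (-a) := (rpow_neg_inv_rpow_neg ht.le ha.ne').symm
    _ < dist y x ^ (-a) := Real.rpow_lt_rpow_of_neg (dist_pos.2 hyx) hy (neg_lt_zero.2 ha)

theorem integral_rpow_neg_div_of_rpow_neg_bounds {a d r R : ℝ} (ha : 0 < a) (hda : d ≠ a)
    (hr : 0 < r) (hR : 0 < R) :
    ∫ t in R ^ (-a)..r ^ (-a), t ^ (-(d / a)) = a / (a - d) * (r ^ (d - a) - R ^ (d - a)) := by
  have hexp : -(d / a) + 1 = (a - d) / a := by field_simp; ring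
  have hpow : ∀ {u : ℝ}, 0 < u → (u ^ (-a)) ^ ((a - d) / a) = u ^ (d - a) := fun hu => by
    rw [← Real.rpow_mul hu.le]; congr 1; field_simp; ring
  have hzero : (0 : ℝ) ∉ Set.uIcc (R ^ (-a)) (r ^ (-a)) := fun h =>
    (lt_min (Real.rpow_pos_of_pos hR _) (Real.rpow_pos_of_pos hr _)).not_ge h.1
  rw [integral_rpow (Or.inr ⟨fun h => hda ?_, hzero⟩), hexp, hpow hr, hpow hR]
  · have : a - d ≠ 0 := sub_ne_zero.2 hda.symm
    field_simp
  · field_simp at h; linarith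

theorem ofReal_le_lintegral_rpow_neg_dist_of_density {X : Type*} [MetricSpace X]
    [MeasurableSpace X] [OpensMeasurableSpace X] (μ : Measure X) {S : Set X} {x : X}
    (hx : x ∉ S) {a d c r R : ℝ} (ha : 0 < a) (hda : d ≠ a) (hc : 0 ≤ c) (hr : 0 < r)
    (hrR : r < R) (hdens : ∀ ρ ∈ Set.Ioo r R, ENNReal.ofReal (c * ρ ^ d) ≤ μ (S ∩ ball x ρ)) :
    ENNReal.ofReal (c * (a / (a - d) * (r ^ (d - a) - R ^ (d - a))))
      ≤ ∫⁻ y in S, ENNReal.ofReal (dist y x ^ (-a)) ∂μ := by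
  have hR : 0 < R := hr.trans hrR
  set I := Set.Ioo (R ^ (-a)) (r ^ (-a))
  have hRr : R ^ (-a) ≤ r ^ (-a) :=
    (Real.rpow_lt_rpow_of_neg hr hrR (neg_lt_zero.2 ha)).le
  have hsuper : ∀ t ∈ I,
      ENNReal.ofReal (c * t ^ (-(d / a))) ≤ μ.restrict S {y | t < dist y x ^ (-a)} := by
    intro t ht
    have ht₀ : 0 < t := (Real.rpow_pos_of_pos hR _).trans ht.1
    have hρ : c * t ^ (-(d / a)) = c * (t ^ (-a⁻¹)) ^ d := by
      rw [← Real.rpow_mul ht₀.le, neg_mul, inv_mul_eq_div]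
    have hsub : S ∩ ball x (t ^ (-a⁻¹)) ⊆ {y | t < dist y x ^ (-a)} ∩ S := fun y hy =>
      ⟨lt_rpow_neg_dist_of_mem_ball ha ht₀ (ne_of_mem_of_not_mem hy.1 hx) hy.2, hy.1⟩
    calc ENNReal.ofReal (c * t ^ (-(d / a)))
        ≤ μ (S ∩ ball x (t ^ (-a⁻¹))) := hρ ▸ hdens _ (rpow_neg_inv_mem_Ioo ha hr hR ht)
      _ ≤ μ ({y | t < dist y x ^ (-a)} ∩ S) := measure_mono hsub
      _ ≤ μ.restrict S {y | t < dist y x ^ (-a)} := Measure.le_restrict_apply _ _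
  have hint : IntegrableOn (fun t => c * t ^ (-(d / a))) I :=
    ((continuousOn_const.mul (continuousOn_id.rpow_const fun t ht =>
      Or.inl ((Real.rpow_pos_of_pos hR _).trans_le ht.1).ne')).integrableOn_compact
        isCompact_Icc).mono_set Set.Ioo_subset_Icc_self
  have hnonneg : 0 ≤ᵐ[volume.restrict I] fun t => c * t ^ (-(d / a)) :=
    (ae_restrict_iff' measurableSet_Ioo).2 (Filter.Eventually.of_forall fun t ht =>
      mul_nonneg hc (Real.rpow_nonneg ((Real.rpow_pos_of_pos hR _).trans ht.1).le _))
  calc ENNReal.ofReal (c * (a / (a - d) * (r ^ (d - a) - R ^ (d - a))))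
      = ENNReal.ofReal (∫ t in I, c * t ^ (-(d / a))) := by
        rw [integral_const_mul, ← integral_Ioc_eq_integral_Ioo,
          ← intervalIntegral.integral_of_le hRr,
          integral_rpow_neg_div_of_rpow_neg_bounds ha hda hr hR]
    _ = ∫⁻ t in I, ENNReal.ofReal (c * t ^ (-(d / a))) :=
        ofReal_integral_eq_lintegral_ofReal hint hnonneg
    _ ≤ ∫⁻ t in I, μ.restrict S {y | t < dist y x ^ (-a)} :=
        setLIntegral_mono' measurableSet_Ioo hsuper
    _ ≤ ∫⁻ t in Set.Ioi 0, μ.restrict S {y | t < dist y x ^ (-a)} :=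
        lintegral_mono_set fun t ht => (Real.rpow_pos_of_pos hR _).trans ht.1
    _ = ∫⁻ y in S, ENNReal.ofReal (dist y x ^ (-a)) ∂μ :=
        (lintegral_eq_lintegral_meas_lt _
          (Filter.Eventually.of_forall fun y => Real.rpow_nonneg dist_nonneg _)
          (by fun_prop)).symm

theorem riesz_integral_lower_bound_from_density_general (n : ℕ) (hn : 1 ≤ n) (s : ℝ)
    (hs : s ∈ Set.Ioo (0:ℝ) 1)
    (Ω : Set (EuclideanSpace ℝ (Fin n)))
    (x : EuclideanSpace ℝ (Fin n)) (hx : x ∈ Ω)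
    (r₀ : ℝ) (hr₀pos : 0 < r₀)
    (c₁ R : ℝ) (hc₁ : 0 < c₁) (hR : 2 * r₀ < R)
    (hdens : ∀ ρ ∈ Set.Ioo (2 * r₀) R,
      ENNReal.ofReal (c₁ * ρ ^ (n : ℝ)) ≤ volume (Ωᶜ ∩ Metric.ball x ρ)) :
    ENNReal.ofReal (c₁ * (2*s)⁻¹ * ((2*r₀) ^ (-(2*s)) - R ^ (-(2*s))))
      ≤ ∫⁻ y in Ωᶜ, ENNReal.ofReal (‖y - x‖ ^ (-(n + 2*s))) := by
  have hs₀ : 0 < 2 * s := by linarith [hs.1]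
  have hn₁ : (1 : ℝ) ≤ n := by exact_mod_cast hn
  have hbound := ofReal_le_lintegral_rpow_neg_dist_of_density volume (not_not_intro hx)
    (a := n + 2 * s) (by linarith) (by linarith : (n : ℝ) ≠ n + 2 * s) hc₁.le
    (by linarith) hR hdens
  simp only [dist_eq_norm, add_sub_cancel_left, sub_add_cancel_left] at hbound
  refine le_trans (ENNReal.ofReal_le_ofReal ?_) hbound
  have hgap : 0 ≤ (2 * r₀) ^ (-(2 * s)) - R ^ (-(2 * s)) :=
    sub_nonneg.2 (Real.rpow_le_rpow_of_nonpos (by linarith) hR.le (by linarith))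
  rw [← mul_assoc]
  refine mul_le_mul_of_nonneg_right (mul_le_mul_of_nonneg_left ?_ hc₁.le) hgap
  rw [div_eq_mul_inv]
  exact le_mul_of_one_le_left (inv_nonneg.2 hs₀.le) (by linarith)

theorem riesz_integral_lower_bound_from_density (n : ℕ) (hn : 1 ≤ n) (s : ℝ)
    (hs : s ∈ Set.Ioo (0:ℝ) 1)
    (Ω : Set (EuclideanSpace ℝ (Fin n))) (hΩ : IsOpen Ω)
    (x : EuclideanSpace ℝ (Fin n)) (hx : x ∈ Ω)
    (r₀ : ℝ) (hr₀ : r₀ = Metric.infDist x Ωᶜ) (hr₀pos : 0 < r₀)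
    (c₁ R : ℝ) (hc₁ : 0 < c₁) (hR : 2 * r₀ < R)
    (hdens : ∀ ρ ∈ Set.Ioo (2 * r₀) R,
      ENNReal.ofReal (c₁ * ρ ^ (n : ℝ)) ≤ volume (Ωᶜ ∩ Metric.ball x ρ)) :
    ENNReal.ofReal (c₁ * (2*s)⁻¹ * ((2*r₀) ^ (-(2*s)) - R ^ (-(2*s))))
      ≤ ∫⁻ y in Ωᶜ, ENNReal.ofReal (‖y - x‖ ^ (-(n + 2*s))) :=
  riesz_integral_lower_bound_from_density_general n hn s hs Ω x hx r₀ hr₀pos c₁ R hc₁ hR hdens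
end

section
/- Let Ω ⊆ ℝⁿ be open satisfying the exterior corkscrew condition (P_{R,κ}) (for all 0 < r < R and z ∈ ∂Ω there is a ball of radius κr contained in Ωᶜ ∩ B_r(z)). Then there exist θ = θ(n, κ) ∈ (0,1) and C = C(n, κ) > 0 such that for all z ∈ ∂Ω, all r ∈ (0, 1/2), and all ρ ∈ (0, 2R), the Lebesgue measure of the set {x : 0 < dist(x, Ωᶜ) < rρ} ∩ B_ρ(z) is at most C r^θ |B_ρ|. -/
/-!
The corkscrew condition at scale `s / 2`, applied at a boundary point within `l * s` of a point
`x`, yields a ball of radius `l * s` inside `ball x s` that misses the `l * s`-neighbourhood of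
`∂Ω` but lies in its `s`-neighbourhood. Packing these holes along a maximal `2 s`-separated net
shows that passing from scale `s` to scale `l * s` shrinks the measure of the boundary
neighbourhood by the factor `(1 + (l / 2) ^ n)⁻¹`. Iterating over the scales `l ^ j * ρ` gives the
decay `r ^ θ`, where `l ^ θ = (1 + (l / 2) ^ n)⁻¹`.
-/

open MeasureTheory Metric ENNReal

open Set Module

theorem logb_inv_mem_Ioo {a l : ℝ} (hl : 0 < l) (ha : 1 < a) (hal : a * l < 1) :
    Real.logb l a⁻¹ ∈ Ioo 0 1 := by
  have hl1 : l < 1 := by nlinarith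
  refine ⟨Real.logb_pos_of_base_lt_one hl hl1 (by positivity) (inv_lt_one_of_one_lt₀ ha), ?_⟩
  rw [Real.logb_lt_iff_lt_rpow_of_base_lt_one hl hl1 (by positivity), Real.rpow_one,
    ← one_div, lt_div_iff₀ (by linarith)]
  linarith

theorem one_le_pow_succ_mul_rpow {a l r θ : ℝ} {j : ℕ} (ha : 0 < a) (hl : 0 ≤ l) (hθ : 0 ≤ θ)
    (hlθ : l ^ θ = a⁻¹) (hr : l ^ (j + 1) ≤ r) : 1 ≤ a ^ (j + 1) * r ^ θ :=
  calc 1 = a ^ (j + 1) * (l ^ θ) ^ (j + 1) := by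
        rw [hlθ, ← mul_pow, mul_inv_cancel₀ ha.ne', one_pow]
    _ = a ^ (j + 1) * (l ^ (j + 1)) ^ θ := by rw [Real.rpow_pow_comm hl]
    _ ≤ a ^ (j + 1) * r ^ θ := by gcongr

section PseudoMetricSpace

variable {α : Type*} [PseudoMetricSpace α]

/-- The exterior corkscrew condition `(P_{R,κ})`. -/
def ExteriorCorkscrew (R κ : ℝ) (Ω : Set α) : Prop :=
  ∀ r ∈ Ioo (0 : ℝ) R, ∀ z ∈ frontier Ω, ∃ x', ball x' (κ * r) ⊆ Ωᶜ ∩ ball z r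

theorem exists_subset_pairwise_le_dist_subset_iUnion_ball (F : Set α) {δ : ℝ} (hδ : 0 < δ) :
    ∃ S ⊆ F, S.Pairwise (fun a b ↦ δ ≤ dist a b) ∧ F ⊆ ⋃ x ∈ S, ball x δ := by
  obtain ⟨S, hS⟩ := zorn_subset {S | S ⊆ F ∧ S.Pairwise (fun a b ↦ δ ≤ dist a b)}
    fun c hc hchain ↦ ⟨⋃₀ c, ⟨sUnion_subset fun S hS ↦ (hc hS).1,
      (pairwise_sUnion hchain.directedOn).2 fun S hS ↦ (hc hS).2⟩, fun _ ↦ subset_sUnion_of_mem⟩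
  refine ⟨S, hS.prop.1, hS.prop.2, fun p hp ↦ ?_⟩
  by_contra hpS
  have hfar : ∀ x ∈ S, δ ≤ dist p x := fun x hx ↦
    not_lt.1 fun h ↦ hpS (mem_biUnion hx (mem_ball.2 h))
  have hp : p ∈ S := hS.2 ⟨insert_subset hp hS.prop.1, hS.prop.2.insert fun x hx _ ↦
    ⟨hfar x hx, dist_comm x p ▸ hfar x hx⟩⟩ (subset_insert p S) (mem_insert p S)
  linarith [hfar p hp, dist_self p]

theorem disjoint_ball_thickening_of_disjoint_ball {c : α} {δ δ' : ℝ} {s : Set α}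
    (h : Disjoint (ball c (δ + δ')) s) : Disjoint (ball c δ) (thickening δ' s) := by
  refine disjoint_left.2 fun w hw hws ↦ ?_
  obtain ⟨y, hy, hwy⟩ := mem_thickening_iff.1 hws
  refine h.ne_of_mem (mem_ball.2 ?_) hy rfl
  linarith [dist_triangle y w c, dist_comm w y, mem_ball.1 hw]

theorem ExteriorCorkscrew.exists_ball_subset_thickening_diff {R κ : ℝ} {Ω : Set α}
    (hΩ : ExteriorCorkscrew R κ Ω) {l s : ℝ} (hl : 0 < l) (hlκ : l ≤ κ / 4) (hl8 : l ≤ 1 / 8)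
    (hs : 0 < s) (hsR : s < 2 * R) {x : α} (hx : x ∈ thickening (l * s) (frontier Ω)) :
    ∃ c, ball c (l * s) ⊆
      ball x s ∩ (thickening s (frontier Ω) \ thickening (l * s) (frontier Ω)) := by
  obtain ⟨z, hz, hxz⟩ := mem_thickening_iff.1 hx
  obtain ⟨c, hc⟩ := hΩ (s / 2) ⟨by positivity, by linarith⟩ z hz
  have hcz : dist c z < s / 2 := (hc (mem_ball_self (by nlinarith))).2
  have hhole : Disjoint (ball c (l * s)) (thickening (l * s) Ω) :=
    disjoint_ball_thickening_of_disjoint_ball <| subset_compl_iff_disjoint_right.1 <|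
      (ball_subset_ball (by nlinarith)).trans (hc.trans inter_subset_left)
  have hfrontier : thickening (l * s) (frontier Ω) ⊆ thickening (l * s) Ω := by
    rw [← thickening_closure (s := Ω)]
    exact thickening_subset_of_subset _ frontier_subset_closure
  refine ⟨c, fun w hw ↦ ?_⟩
  have hwz : dist w z < l * s + s / 2 := by linarith [dist_triangle w c z, mem_ball.1 hw]
  refine ⟨mem_ball.2 ?_, mem_thickening_iff.2 ⟨z, hz, by nlinarith⟩,
    fun hw' ↦ hhole.ne_of_mem hw (hfrontier hw') rfl⟩
  nlinarith [dist_triangle w z x, dist_comm x z]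

end PseudoMetricSpace

theorem setOf_infDist_compl_subset_thickening_frontier {E : Type*} [NormedAddCommGroup E]
    [NormedSpace ℝ E] [FiniteDimensional ℝ E] (s : Set E) (δ : ℝ) :
    {x | 0 < infDist x sᶜ ∧ infDist x sᶜ < δ} ⊆ thickening δ (frontier s) := by
  rintro x ⟨hpos, hlt⟩
  have hx : x ∈ s := by_contra fun h ↦ hpos.ne' (infDist_zero_of_mem h)
  have hs : s ≠ univ := by
    rintro rfl
    simp at hpos
  obtain ⟨y, hy, hxy⟩ := exists_mem_frontier_infDist_compl_eq_dist hx hs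
  exact mem_thickening_iff.2 ⟨y, hy, hxy ▸ hlt⟩

section AddHaar

variable {E : Type*} [NormedAddCommGroup E] [NormedSpace ℝ E] [FiniteDimensional ℝ E]
  [MeasurableSpace E] [BorelSpace E] (μ : Measure E) [μ.IsAddHaarMeasure]

theorem ofReal_one_add_mul_addHaar_le_of_forall_exists_ball {F D : Set E} {l s : ℝ} (hl : 0 < l)
    (hs : 0 < s) (hFD : F ⊆ D) (hhole : ∀ x ∈ F, ∃ c, ball c (l * s) ⊆ ball x s ∩ (D \ F)) :
    ENNReal.ofReal (1 + (l / 2) ^ finrank ℝ E) * μ F ≤ μ D := by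
  obtain ⟨S, hSF, hSsep, hFS⟩ :=
    exists_subset_pairwise_le_dist_subset_iUnion_ball F (by positivity : 0 < 2 * s)
  have hS : S.Countable := Set.PairwiseDisjoint.countable_of_isOpen
    (fun a ha b hb hab ↦ ball_disjoint_ball (by linarith [hSsep ha hb hab]))
    (fun _ _ ↦ isOpen_ball) (fun x _ ↦ ⟨x, mem_ball_self hs⟩)
  choose! c hc using fun x (hx : x ∈ S) ↦ hhole x (hSF hx)
  set U := ⋃ x ∈ S, ball (c x) (l * s)
  have hdisj : S.PairwiseDisjoint fun x ↦ ball (c x) (l * s) := fun a ha b hb hab ↦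
    (ball_disjoint_ball (by linarith [hSsep ha hb hab])).mono
      ((hc a ha).trans inter_subset_left) ((hc b hb).trans inter_subset_left)
  have hU : μ U = ENNReal.ofReal ((l / 2) ^ finrank ℝ E) * ∑' x : S, μ (ball (x : E) (2 * s)) := by
    rw [measure_biUnion hS hdisj fun _ _ ↦ measurableSet_ball, ← ENNReal.tsum_mul_left]
    congr with x
    rw [show l * s = l / 2 * (2 * s) by ring, Measure.addHaar_ball_mul_of_pos μ _ (by positivity),
      Measure.addHaar_ball_center μ (x : E)]
  have hFU : Disjoint F U :=
    disjoint_iUnion₂_right.2 fun x hx ↦ disjoint_sdiff_right.mono_right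
      ((hc x hx).trans inter_subset_right)
  calc ENNReal.ofReal (1 + (l / 2) ^ finrank ℝ E) * μ F
      = μ F + ENNReal.ofReal ((l / 2) ^ finrank ℝ E) * μ F := by
        rw [ENNReal.ofReal_add zero_le_one (by positivity), ENNReal.ofReal_one, add_mul, one_mul]
    _ ≤ μ F + μ U := by
        rw [hU]
        gcongr
        exact (measure_mono hFS).trans (measure_biUnion_le μ hS _)
    _ = μ (F ∪ U) := (measure_union hFU (.biUnion hS fun _ _ ↦ measurableSet_ball)).symm
    _ ≤ μ D := measure_mono <| union_subset hFD <| iUnion₂_subset fun x hx ↦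
        (hc x hx).trans (inter_subset_right.trans sdiff_subset)

variable {R κ : ℝ} {Ω : Set E} {l : ℝ}

theorem ExteriorCorkscrew.ofReal_mul_addHaar_thickening_le (hΩ : ExteriorCorkscrew R κ Ω)
    (hl : 0 < l) (hlκ : l ≤ κ / 4) (hl8 : l ≤ 1 / 8) {s : ℝ} (hs : 0 < s) (hsR : s < 2 * R)
    (z : E) (t : ℝ) :
    ENNReal.ofReal (1 + (l / 2) ^ finrank ℝ E) *
        μ (thickening (l * s) (frontier Ω) ∩ ball z (t - s)) ≤
      μ (thickening s (frontier Ω) ∩ ball z t) := by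
  refine ofReal_one_add_mul_addHaar_le_of_forall_exists_ball μ hl hs
    (inter_subset_inter (thickening_mono (by nlinarith) _) (ball_subset_ball (by linarith)))
    fun x hx ↦ ?_
  obtain ⟨c, hc⟩ := hΩ.exists_ball_subset_thickening_diff hl hlκ hl8 hs hsR hx.1
  refine ⟨c, fun w hw ↦ ⟨(hc hw).1, ⟨(hc hw).2.1, mem_ball.2 ?_⟩, fun hwF ↦ (hc hw).2.2 hwF.1⟩⟩
  linarith [dist_triangle w x z, mem_ball.1 (hc hw).1, mem_ball.1 hx.2]

/-- The radii `ρ * (1 + l ^ j / (1 - l))` drop by exactly `l ^ j * ρ` from one scale to the next. -/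
theorem ExteriorCorkscrew.ofReal_pow_mul_addHaar_thickening_le (hΩ : ExteriorCorkscrew R κ Ω)
    (hl : 0 < l) (hlκ : l ≤ κ / 4) (hl8 : l ≤ 1 / 8) {ρ : ℝ} (hρ : 0 < ρ) (hρR : ρ < 2 * R)
    (z : E) (j : ℕ) :
    ENNReal.ofReal (1 + (l / 2) ^ finrank ℝ E) ^ j *
        μ (thickening (l ^ j * ρ) (frontier Ω) ∩ ball z (ρ * (1 + l ^ j / (1 - l)))) ≤
      μ (ball z (ρ * (1 + 1 / (1 - l)))) := by
  induction j with
  | zero => simpa using measure_mono inter_subset_right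
  | succ j ih =>
    have hlj : l ^ j ≤ 1 := pow_le_one₀ hl.le (by linarith)
    have h1l : 1 - l ≠ 0 := by linarith
    have hstep := hΩ.ofReal_mul_addHaar_thickening_le μ hl hlκ hl8 (s := l ^ j * ρ)
      (by positivity) (by nlinarith) z (ρ * (1 + l ^ j / (1 - l)))
    rw [show ρ * (1 + l ^ j / (1 - l)) - l ^ j * ρ = ρ * (1 + l ^ (j + 1) / (1 - l)) by
      field_simp
      ring, ← mul_assoc, ← pow_succ'] at hstep
    rw [pow_succ, mul_assoc]
    exact (mul_le_mul_of_nonneg_left hstep (by positivity)).trans ih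

theorem ExteriorCorkscrew.addHaar_infDist_compl_lt_inter_ball_le (hΩ : ExteriorCorkscrew R κ Ω)
    (hl : 0 < l) (hlκ : l ≤ κ / 4) (hl8 : l ≤ 1 / 8) {ρ : ℝ} (hρ : 0 < ρ) (hρR : ρ < 2 * R)
    {r : ℝ} (hr : 0 < r) (hr1 : r ≤ 1) (z : E) :
    μ ({x | 0 < infDist x Ωᶜ ∧ infDist x Ωᶜ < r * ρ} ∩ ball z ρ) ≤
      ENNReal.ofReal ((1 + (l / 2) ^ finrank ℝ E) * (1 + 1 / (1 - l)) ^ finrank ℝ E *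
        r ^ Real.logb l (1 + (l / 2) ^ finrank ℝ E)⁻¹) * μ (ball z ρ) := by
  set a := 1 + (l / 2) ^ finrank ℝ E
  set K := 1 + 1 / (1 - l)
  have ha : 0 < a := by positivity
  have ha1 : 1 ≤ a := le_add_of_nonneg_right (by positivity)
  have hK : 0 < K := by
    have : 0 < 1 - l := by linarith
    positivity
  obtain ⟨j, hlr, hrl⟩ := exists_nat_pow_near_of_lt_one hr hr1 hl (by linarith)
  have hsub : {x | 0 < infDist x Ωᶜ ∧ infDist x Ωᶜ < r * ρ} ∩ ball z ρ ⊆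
      thickening (l ^ j * ρ) (frontier Ω) ∩ ball z (ρ * (1 + l ^ j / (1 - l))) := by
    refine inter_subset_inter ((setOf_infDist_compl_subset_thickening_frontier Ω _).trans
      (thickening_mono (by nlinarith) _)) (ball_subset_ball ?_)
    have : 0 ≤ l ^ j / (1 - l) := div_nonneg (by positivity) (by linarith)
    nlinarith
  have hexp : 1 ≤ a ^ (j + 1) * r ^ Real.logb l a⁻¹ := one_le_pow_succ_mul_rpow ha hl.le
    (Real.logb_nonneg_of_base_lt_one hl (by linarith) (by positivity) (inv_le_one_of_one_le₀ ha1))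
    (Real.rpow_logb hl (by linarith) (by positivity)) hlr.le
  refine (measure_mono hsub).trans ?_
  have ha0 : ENNReal.ofReal a ^ j ≠ 0 := pow_ne_zero j (ENNReal.ofReal_pos.2 ha).ne'
  rw [← ENNReal.mul_le_mul_iff_right ha0 (pow_ne_top ofReal_ne_top)]
  calc _ ≤ μ (ball z (ρ * K)) := hΩ.ofReal_pow_mul_addHaar_thickening_le μ hl hlκ hl8 hρ hρR z j
    _ = ENNReal.ofReal (K ^ finrank ℝ E) * μ (ball z ρ) := by
      rw [mul_comm ρ, Measure.addHaar_ball_mul_of_pos μ _ hK, Measure.addHaar_ball_center μ z]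
    _ ≤ ENNReal.ofReal a ^ j *
        (ENNReal.ofReal (a * K ^ finrank ℝ E * r ^ Real.logb l a⁻¹) * μ (ball z ρ)) := by
      rw [← mul_assoc, ← ofReal_pow ha.le, ← ofReal_mul (by positivity)]
      gcongr
      rw [pow_succ] at hexp
      nlinarith [pow_pos hK (finrank ℝ E)]

end AddHaar

theorem tubular_neighborhood_estimate_from_corkscrew_general (n : ℕ)
    (R κ : ℝ) (hκ : 0 < κ) :
    ∃ θ ∈ Set.Ioo (0:ℝ) 1, ∃ C > (0:ℝ),
      ∀ Ω : Set (EuclideanSpace ℝ (Fin n)), IsOpen Ω →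
        (∀ r ∈ Set.Ioo (0:ℝ) R, ∀ z ∈ frontier Ω,
          ∃ x' : EuclideanSpace ℝ (Fin n),
            Metric.ball x' (κ * r) ⊆ Ωᶜ ∩ Metric.ball z r) →
        ∀ z ∈ frontier Ω, ∀ r ∈ Set.Ioo (0:ℝ) (1/2), ∀ ρ ∈ Set.Ioo (0:ℝ) (2*R),
          volume ({x | 0 < Metric.infDist x Ωᶜ ∧ Metric.infDist x Ωᶜ < r * ρ}
              ∩ Metric.ball z ρ)
            ≤ ENNReal.ofReal (C * r ^ θ) * volume (Metric.ball z ρ) := by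
  set l := min (κ / 4) (1 / 8)
  have hl : 0 < l := by positivity
  have hl8 : l ≤ 1 / 8 := min_le_right _ _
  have hal : (1 + (l / 2) ^ n) * l < 1 := by
    nlinarith [pow_le_one₀ (n := n) (by positivity : 0 ≤ l / 2) (by linarith)]
  have h1l : 0 < 1 - l := by linarith
  refine ⟨Real.logb l (1 + (l / 2) ^ n)⁻¹,
    logb_inv_mem_Ioo hl (lt_add_of_pos_right 1 (by positivity)) hal,
    (1 + (l / 2) ^ n) * (1 + 1 / (1 - l)) ^ n, by positivity, ?_⟩
  rintro Ω - hΩ z - r ⟨hr, hr2⟩ ρ ⟨hρ, hρR⟩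
  simpa only [finrank_euclideanSpace_fin] using
    ExteriorCorkscrew.addHaar_infDist_compl_lt_inter_ball_le volume hΩ hl (min_le_left _ _) hl8 hρ
      hρR hr (by linarith) z

theorem tubular_neighborhood_estimate_from_corkscrew (n : ℕ) (hn : 2 ≤ n)
    (R κ : ℝ) (hR : 0 < R) (hκ : 0 < κ) (hκR : κ < R) :
    ∃ θ ∈ Set.Ioo (0:ℝ) 1, ∃ C > (0:ℝ),
      ∀ Ω : Set (EuclideanSpace ℝ (Fin n)), IsOpen Ω →
        (∀ r ∈ Set.Ioo (0:ℝ) R, ∀ z ∈ frontier Ω,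
          ∃ x' : EuclideanSpace ℝ (Fin n),
            Metric.ball x' (κ * r) ⊆ Ωᶜ ∩ Metric.ball z r) →
        ∀ z ∈ frontier Ω, ∀ r ∈ Set.Ioo (0:ℝ) (1/2), ∀ ρ ∈ Set.Ioo (0:ℝ) (2*R),
          volume ({x | 0 < Metric.infDist x Ωᶜ ∧ Metric.infDist x Ωᶜ < r * ρ}
              ∩ Metric.ball z ρ)
            ≤ ENNReal.ofReal (C * r ^ θ) * volume (Metric.ball z ρ) :=
  tubular_neighborhood_estimate_from_corkscrew_general n R κ hκ
end
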